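/- arXiv:1101.5896 — 9 statements merged into one kernel-verified Lean document; each statement's English description precedes it below -/
import Mathlib

section
/- Let O be an operator on a set S and define the operator L(O) by: a ∈ L(O)(U) iff for all V ⊆ S, a ∈ O(V) implies that U and O(V) have a common element. Then for every operator O' on S, O' ⧓ O if and only if O' ⊆ L(O); in particular L(O) is the greatest operator on S that is left-compatible with O. -/
/-- `Compat O O'` : `O` is left-compatible with `O'` (written `O ⧓ O'`). -/
def Compat {S : Type*} (O O' : Set S → Set S) : Prop :=
  ∀ U V : Set S, (O U ∩ O' V).Nonempty → (U ∩ O' V).Nonempty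

/-- The operator `L(O)`: `a ∈ L(O)(U)` iff every `O(V)` containing `a` overlaps `U`. -/
def LL {S : Type*} (O : Set S → Set S) : Set S → Set S :=
  fun U => {a | ∀ V : Set S, a ∈ O V → (U ∩ O V).Nonempty}

section

variable {S : Type*} {O O' : Set S → Set S}

theorem compat_iff_le_LL : Compat O' O ↔ O' ≤ LL O :=
  ⟨fun h U _ ha V haV => h U V ⟨_, ha, haV⟩,
    fun h U V ⟨_, haU, haV⟩ => h U haU V haV⟩

theorem compat_LL : Compat (LL O) O :=
  compat_iff_le_LL.mpr le_rfl

end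

/-- For every operator `O'`, `O' ⧓ O` iff `O' ⊆ L(O)`; in particular `L(O)` is
the greatest operator left-compatible with `O`. -/
theorem LL_is_greatest_left_compatible {S : Type*} (O : Set S → Set S) :
    (∀ O' : Set S → Set S, Compat O' O ↔ (∀ U : Set S, O' U ⊆ LL O U)) ∧
    Compat (LL O) O ∧
    (∀ O' : Set S → Set S, Compat O' O → ∀ U : Set S, O' U ⊆ LL O U) :=
  ⟨fun _ => compat_iff_le_LL, compat_LL, fun _ => compat_iff_le_LL.mp⟩
end

section
/- Let O be an operator on a set S and let Z* = ⋃{Z ⊆ S | Z splits O} be the union of all subsets that split O. Then: (1) Z* splits O; (2) O is left-compatible with the constant operator const_{Z*} (with constant value Z*); and (3) for every operator O' on S such that O ⧓ O', one has O'(U) ⊆ Z* for all U ⊆ S. Hence const_{Z*} is the greatest operator right-compatible with O. -/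
/-- `Z` splits the operator `O`. -/
def Splits {S : Type*} (Z : Set S) (O : Set S → Set S) : Prop :=
  ∀ U : Set S, (O U ∩ Z).Nonempty → (U ∩ Z).Nonempty

/- Splitting is tested one point of `O U ∩ Z` at a time, so it is stable under unions; and
`O ⧓ O'` says exactly that every value `O' V` splits `O`. -/

section

variable {S : Type*} {O O' : Set S → Set S}

theorem Splits.sUnion {𝒵 : Set (Set S)} (h𝒵 : ∀ Z ∈ 𝒵, Splits Z O) : Splits (⋃₀ 𝒵) O := by
  rintro U ⟨x, hxOU, Z, hZ, hxZ⟩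
  obtain ⟨y, hyU, hyZ⟩ := h𝒵 Z hZ U ⟨x, hxOU, hxZ⟩
  exact ⟨y, hyU, Z, hZ, hyZ⟩

theorem compat_iff_forall_splits : Compat O O' ↔ ∀ V, Splits (O' V) O :=
  ⟨fun h V U => h U V, fun h U V => h V U⟩

theorem compat_const_iff {W : Set S} : Compat O (fun _ => W) ↔ Splits W O := by
  simp only [compat_iff_forall_splits, forall_const]

end

/-- Let `Z* = ⋃{Z ⊆ S | Z splits O}`. Then (1) `Z*` splits `O`;
(2) `O ⧓ const_{Z*}`; (3) every operator right-compatible with `O` is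
contained in `const_{Z*}`. Hence `const_{Z*}` is the greatest operator
right-compatible with `O`. -/
theorem const_largest_splitting_is_greatest_right_compatible {S : Type*}
    (O : Set S → Set S) :
    Splits (⋃₀ {Z : Set S | Splits Z O}) O ∧
    Compat O (fun _ => ⋃₀ {Z : Set S | Splits Z O}) ∧
    (∀ O' : Set S → Set S, Compat O O' →
      ∀ U : Set S, O' U ⊆ ⋃₀ {Z : Set S | Splits Z O}) := by
  have hsplits : Splits (⋃₀ {Z : Set S | Splits Z O}) O := Splits.sUnion fun _ hZ => hZ
  refine ⟨hsplits, compat_const_iff.mpr hsplits, fun O' hcompat U => ?_⟩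
  exact Set.subset_sUnion_of_mem (compat_iff_forall_splits.mp hcompat U)
end

section
/- For every operator O on a set S, the operator L(O) defined by a ∈ L(O)(U) iff (for all V ⊆ S, a ∈ O(V) implies U and O(V) have a common element) is a saturation on S, i.e. it is monotone, expansive and idempotent. -/
/-- A saturation: monotone, idempotent and expansive operator. -/
def IsSaturation {S : Type*} (A : Set S → Set S) : Prop :=
  (∀ U V : Set S, U ⊆ V → A U ⊆ A V) ∧ (∀ U : Set S, A (A U) = A U) ∧
  (∀ U : Set S, U ⊆ A U)

section

variable {S : Type*} (O : Set S → Set S)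

theorem LL_mono {U V : Set S} (h : U ⊆ V) : LL O U ⊆ LL O V := fun _ ha W hW =>
  (ha W hW).mono (Set.inter_subset_inter_left _ h)

theorem subset_LL (U : Set S) : U ⊆ LL O U := fun a ha _ hV => ⟨a, ha, hV⟩

/-- A witness `b ∈ L(O)(U) ∩ O(V)` lies in `O(V)` itself, so `O(V)` already meets `U`. -/
theorem LL_LL_subset (U : Set S) : LL O (LL O U) ⊆ LL O U := fun a ha V hV => by
  obtain ⟨b, hbU, hbV⟩ := ha V hV
  exact hbU V hbV

theorem LL_LL (U : Set S) : LL O (LL O U) = LL O U :=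
  (LL_LL_subset O U).antisymm (subset_LL O _)

end

/-- For every operator `O`, the operator `L(O)` is a saturation. -/
theorem LL_is_saturation {S : Type*} (O : Set S → Set S) :
    IsSaturation (LL O) :=
  ⟨fun _ _ => LL_mono O, LL_LL O, subset_LL O⟩
end

section
/- Let J be a reduction on a set S and let AA(J) be the operator defined by: a ∈ AA(J)(U) iff for all V ⊆ S, a ∈ J(V) implies that U and J(V) have a common element. Then AA(J) is the greatest saturation compatible with J; that is, AA(J) is a saturation, AA(J) ⧓ J, and for every saturation A on S: A ⧓ J if and only if A ⊆ AA(J). -/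
/-- A reduction: monotone, idempotent and contractive operator. -/
def IsReduction {S : Type*} (J : Set S → Set S) : Prop :=
  (∀ U V : Set S, U ⊆ V → J U ⊆ J V) ∧ (∀ U : Set S, J (J U) = J U) ∧
  (∀ U : Set S, J U ⊆ U)

/-- `AA(J)`: `a ∈ AA(J)(U)` iff every `J(V)` containing `a` overlaps `U`. -/
def AA {S : Type*} (J : Set S → Set S) : Set S → Set S :=
  fun U => {a | ∀ V : Set S, a ∈ J V → (U ∩ J V).Nonempty}

section

variable {S : Type*} (J : Set S → Set S)

theorem AA_mono {U V : Set S} (hUV : U ⊆ V) : AA J U ⊆ AA J V := fun _ ha W haW =>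
  let ⟨b, hbU, hbW⟩ := ha W haW
  ⟨b, hUV hbU, hbW⟩

theorem subset_AA (U : Set S) : U ⊆ AA J U := fun a ha _ haV => ⟨a, ha, haV⟩

theorem AA_AA (U : Set S) : AA J (AA J U) = AA J U := by
  refine Set.Subset.antisymm ?_ (subset_AA J _)
  intro a ha V haV
  obtain ⟨b, hb, hbV⟩ := ha V haV
  exact hb V hbV

theorem isSaturation_AA : IsSaturation (AA J) :=
  ⟨fun _ _ => AA_mono J, AA_AA J, subset_AA J⟩

theorem compat_iff_forall_subset_AA {A : Set S → Set S} :
    Compat A J ↔ ∀ U : Set S, A U ⊆ AA J U :=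
  ⟨fun hA U a ha V haV => hA U V ⟨a, ha, haV⟩,
    fun hA U V ⟨_, haU, haV⟩ => hA U haU V haV⟩

theorem compat_AA : Compat (AA J) J :=
  (compat_iff_forall_subset_AA J).2 fun _ => subset_rfl

end

theorem AA_greatest_saturation_compatible_general {S : Type*} (J : Set S → Set S) :
    IsSaturation (AA J) ∧ Compat (AA J) J ∧
    (∀ A : Set S → Set S, IsSaturation A →
      (Compat A J ↔ ∀ U : Set S, A U ⊆ AA J U)) :=
  ⟨isSaturation_AA J, compat_AA J, fun _ _ => compat_iff_forall_subset_AA J⟩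

/-- `AA(J)` is the greatest saturation compatible with the reduction `J`. -/
theorem AA_greatest_saturation_compatible {S : Type*} (J : Set S → Set S)
    (hJ : IsReduction J) :
    IsSaturation (AA J) ∧ Compat (AA J) J ∧
    (∀ A : Set S → Set S, IsSaturation A →
      (Compat A J ↔ ∀ U : Set S, A U ⊆ AA J U)) :=
  AA_greatest_saturation_compatible_general J
end

section
/- For every set S, every saturation A on S and every reduction J on S, the following three conditions are equivalent: A ⊆ AA(J); A ⧓ J; J ⊆ JJ(A). Hence the maps AA (from reductions to saturations) and JJ (from saturations to reductions) form an antitone Galois connection. -/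
/-- `JJ(A)(V) = ⋃{Z ⊆ V | Z splits A}`. -/
def JJ {S : Type*} (A : Set S → Set S) : Set S → Set S :=
  fun V => {a | ∃ Z : Set S, a ∈ Z ∧ Z ⊆ V ∧ Splits Z A}

/-!
`A ⧓ J` says exactly that every `J V` splits `A`, and `JJ A Z` is the largest subset of `Z`
splitting `A`, so `Z` splits `A` iff `Z ⊆ JJ A Z`. Since `J (J V) = J V ⊆ V`, the condition
`J V ⊆ JJ A V` for all `V` is then the same as every `J V` splitting `A`.
-/

section

variable {S : Type*}

theorem subset_AA_iff_compat (A J : Set S → Set S) :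
    (∀ U, A U ⊆ AA J U) ↔ Compat A J :=
  ⟨fun h U V ⟨_, haU, haJ⟩ => h U haU V haJ, fun h U _ haU V haJ => h U V ⟨_, haU, haJ⟩⟩

theorem compat_iff_forall_splits_s11 (A J : Set S → Set S) :
    Compat A J ↔ ∀ V, Splits (J V) A :=
  ⟨fun h V U => h U V, fun h U V => h V U⟩

theorem JJ_subset (A : Set S → Set S) (V : Set S) : JJ A V ⊆ V :=
  fun _ ⟨_, haZ, hZV, _⟩ => hZV haZ

theorem JJ_mono (A : Set S → Set S) {V W : Set S} (hVW : V ⊆ W) : JJ A V ⊆ JJ A W :=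
  fun _ ⟨Z, haZ, hZV, hZ⟩ => ⟨Z, haZ, hZV.trans hVW, hZ⟩

theorem splits_JJ (A : Set S → Set S) (V : Set S) : Splits (JJ A V) A := by
  rintro U ⟨a, haA, Z, haZ, hZV, hZ⟩
  obtain ⟨x, hxU, hxZ⟩ := hZ U ⟨a, haA, haZ⟩
  exact ⟨x, hxU, Z, hxZ, hZV, hZ⟩

theorem splits_iff_subset_JJ_self (A : Set S → Set S) (Z : Set S) :
    Splits Z A ↔ Z ⊆ JJ A Z := by
  refine ⟨fun hZ a haZ => ⟨Z, haZ, subset_rfl, hZ⟩, fun hZ => ?_⟩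
  rw [hZ.antisymm (JJ_subset A Z)]
  exact splits_JJ A Z

end

theorem galois_connection_AA_JJ_general {S : Type*} (A J : Set S → Set S)
    (hJ : IsReduction J) :
    ((∀ U : Set S, A U ⊆ AA J U) ↔ Compat A J) ∧
    (Compat A J ↔ (∀ V : Set S, J V ⊆ JJ A V)) := by
  obtain ⟨-, hJ_idem, hJ_le⟩ := hJ
  refine ⟨subset_AA_iff_compat A J,
    (compat_iff_forall_splits_s11 A J).trans ⟨fun h V => ?_, fun h V => ?_⟩⟩
  · exact ((splits_iff_subset_JJ_self A _).1 (h V)).trans (JJ_mono A (hJ_le V))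
  · have hJJ := h (J V)
    rw [hJ_idem] at hJJ
    exact (splits_iff_subset_JJ_self A _).2 hJJ

/-- The Galois connection: `A ⊆ AA(J) ⇔ A ⧓ J ⇔ J ⊆ JJ(A)`. -/
theorem galois_connection_AA_JJ {S : Type*} (A J : Set S → Set S)
    (hA : IsSaturation A) (hJ : IsReduction J) :
    ((∀ U : Set S, A U ⊆ AA J U) ↔ Compat A J) ∧
    (Compat A J ↔ (∀ V : Set S, J V ⊆ JJ A V)) :=
  galois_connection_AA_JJ_general A J hJ
end

section
/- Let S be a set and let {(A_i, J_i) | i ∈ I} be a set-indexed family of pairs where each A_i is a saturation on S, each J_i is a reduction on S, and A_i ⧓ J_i for every i ∈ I. Then the pointwise meet ⋀_{i∈I} A_i is compatible with the pointwise join ⋁_{i∈I} J_i, i.e. (⋀_{i∈I} A_i) ⧓ (⋁_{i∈I} J_i); hence (S, ⋀_{i∈I} A_i, ⋁_{i∈I} J_i) is a basic topology. -/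
section

variable {S ι : Type*}

theorem IsSaturation.iInter {A : ι → Set S → Set S} (hA : ∀ i, IsSaturation (A i)) :
    IsSaturation (fun W => ⋂ i, A i W) := by
  refine ⟨fun U V hUV => Set.iInter_mono fun i => (hA i).1 U V hUV, fun U => ?_,
    fun U => Set.subset_iInter fun i => (hA i).2.2 U⟩
  refine Set.Subset.antisymm (Set.subset_iInter fun i => ?_) (Set.subset_iInter fun i => ?_)
  · calc ⋂ j, A j (⋂ k, A k U) ⊆ A i (A i U) :=
          (Set.iInter_subset _ i).trans ((hA i).1 _ _ (Set.iInter_subset _ i))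
      _ = A i U := (hA i).2.1 U
  · exact (hA i).2.2 _

theorem IsReduction.iUnion {J : ι → Set S → Set S} (hJ : ∀ i, IsReduction (J i)) :
    IsReduction (fun W => ⋃ i, J i W) := by
  refine ⟨fun U V hUV => Set.iUnion_mono fun i => (hJ i).1 U V hUV, fun U => ?_,
    fun U => Set.iUnion_subset fun i => (hJ i).2.2 U⟩
  refine Set.Subset.antisymm (Set.iUnion_subset fun i => ?_) (Set.iUnion_subset fun i => ?_)
  · exact (hJ i).2.2 _
  · calc J i U = J i (J i U) := ((hJ i).2.1 U).symm
      _ ⊆ J i (⋃ k, J k U) := (hJ i).1 _ _ (Set.subset_iUnion (fun k => J k U) i)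
      _ ⊆ ⋃ j, J j (⋃ k, J k U) := Set.subset_iUnion (fun j => J j (⋃ k, J k U)) i

theorem Compat.iInter_iUnion {A J : ι → Set S → Set S} (hC : ∀ i, Compat (A i) (J i)) :
    Compat (fun W => ⋂ i, A i W) (fun W => ⋃ i, J i W) := by
  rintro U V ⟨x, hxA, hxJ⟩
  obtain ⟨i, hxJi⟩ := Set.mem_iUnion.mp hxJ
  obtain ⟨y, hyU, hyJ⟩ := hC i U V ⟨x, Set.mem_iInter.mp hxA i, hxJi⟩
  exact ⟨y, hyU, Set.mem_iUnion_of_mem i hyJ⟩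

end

/-- Given a family of basic topologies `(S, A_i, J_i)`, the triple
`(S, ⋀_i A_i, ⋁_i J_i)` is a basic topology: the pointwise meet of the
saturations is a saturation compatible with the pointwise join of the
reductions, which is a reduction. -/
theorem join_of_basic_topologies {S : Type*} {ι : Type*}
    (A : ι → (Set S → Set S)) (J : ι → (Set S → Set S))
    (hA : ∀ i : ι, IsSaturation (A i)) (hJ : ∀ i : ι, IsReduction (J i))
    (hC : ∀ i : ι, Compat (A i) (J i)) :
    IsSaturation (fun W => ⋂ i : ι, A i W) ∧
    IsReduction (fun W => ⋃ i : ι, J i W) ∧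
    Compat (fun W => ⋂ i : ι, A i W) (fun W => ⋃ i : ι, J i W) :=
  ⟨IsSaturation.iInter hA, IsReduction.iUnion hJ, Compat.iInter_iUnion hC⟩
end

section
/- Let S be a set, let A' be a saturation and J' a reduction on S with A' ⧓ J'. Then: (1) for every reduction J on S, J ⊆ J' if and only if (A' ⊆ AA(J) and J ⊆ J'); equivalently, J ⊆ J' implies A' ⊆ AA(J). (2) For every saturation A on S, A ⊆ A' if and only if (A ⊆ A' and J' ⊆ JJ(A)); equivalently, A ⊆ A' implies J' ⊆ JJ(A). (In the poset of basic topologies on S ordered by [A₁,J₁] ≤ [A₂,J₂] iff A₂ ⊆ A₁ and J₁ ⊆ J₂, this says the embedding J ↦ [AA(J),J] is left adjoint to the forgetful map [A,J] ↦ J, and the forgetful map [A,J] ↦ A is left adjoint to the embedding A ↦ [A,JJ(A)].) -/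
/-! Compatibility `A ⧓ J` says exactly that every `J V` splits `A`, i.e. that `A ≤ AA(J)`. It is
antitone in `A`, and it passes from `J'` to a smaller reduction `J` because every `J V` is then a
fixed point of the contractive `J'`. A reduction compatible with `A` lies below `JJ(A)`, with `J U`
itself as the witnessing splitting subset of `U`. -/

theorem Compat.splits {S : Type*} {O O' : Set S → Set S} (h : Compat O O') (V : Set S) :
    Splits (O' V) O :=
  fun U => h U V

theorem compat_iff_le_AA {S : Type*} {A J : Set S → Set S} :
    Compat A J ↔ ∀ U, A U ⊆ AA J U :=
  ⟨fun h U _ ha V haV => h U V ⟨_, ha, haV⟩, fun h U V ⟨_, ha, haV⟩ => h U ha V haV⟩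

theorem Compat.mono_left {S : Type*} {A A' J : Set S → Set S} (h : Compat A' J)
    (hAA' : ∀ U, A U ⊆ A' U) : Compat A J :=
  fun U V ⟨a, ha, haJ⟩ => h U V ⟨a, hAA' U ha, haJ⟩

theorem Compat.mono_right {S : Type*} {A J J' : Set S → Set S} (h : Compat A J')
    (hJ'_contr : ∀ U, J' U ⊆ U) (hJ_idem : ∀ U, J (J U) = J U) (hJJ' : ∀ U, J U ⊆ J' U) :
    Compat A J := by
  rintro U V ⟨a, ha, haJ⟩
  have haJ' : a ∈ J' (J V) := hJJ' (J V) ((hJ_idem V).symm ▸ haJ)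
  obtain ⟨b, hbU, hbJ'⟩ := h U (J V) ⟨a, ha, haJ'⟩
  exact ⟨b, hbU, hJ'_contr (J V) hbJ'⟩

theorem Compat.le_JJ {S : Type*} {A J : Set S → Set S} (h : Compat A J)
    (hJ_contr : ∀ U, J U ⊆ U) (U : Set S) : J U ⊆ JJ A U :=
  fun _ ha => ⟨J U, ha, hJ_contr U, h.splits U⟩

theorem embedding_forgetful_adjunctions_general {S : Type*} (A' J' : Set S → Set S)
    (hJ' : IsReduction J') (hC : Compat A' J') :
    (∀ J : Set S → Set S, IsReduction J →
      ((∀ U : Set S, J U ⊆ J' U) ↔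
        ((∀ U : Set S, A' U ⊆ AA J U) ∧ (∀ U : Set S, J U ⊆ J' U)))) ∧
    (∀ A : Set S → Set S, IsSaturation A →
      ((∀ U : Set S, A U ⊆ A' U) ↔
        ((∀ U : Set S, A U ⊆ A' U) ∧ (∀ U : Set S, J' U ⊆ JJ A U)))) := by
  refine ⟨fun J hJ => ⟨fun hJJ' => ⟨?_, hJJ'⟩, And.right⟩,
    fun A _ => ⟨fun hAA' => ⟨hAA', ?_⟩, And.left⟩⟩
  · exact compat_iff_le_AA.mp (hC.mono_right hJ'.2.2 hJ.2.1 hJJ')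
  · exact (hC.mono_left hAA').le_JJ hJ'.2.2

/-- For a basic topology `[A', J']`: (1) for every reduction `J`,
`[AA(J), J] ≤ [A', J']` iff `J ⊆ J'`; (2) for every saturation `A`,
`[A', J'] ≤ [A, JJ(A)]` iff `A ⊆ A'`. (Here `[A₁,J₁] ≤ [A₂,J₂]` means
`A₂ ⊆ A₁` and `J₁ ⊆ J₂`.) -/
theorem embedding_forgetful_adjunctions {S : Type*} (A' J' : Set S → Set S)
    (hA' : IsSaturation A') (hJ' : IsReduction J') (hC : Compat A' J') :
    (∀ J : Set S → Set S, IsReduction J →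
      ((∀ U : Set S, J U ⊆ J' U) ↔
        ((∀ U : Set S, A' U ⊆ AA J U) ∧ (∀ U : Set S, J U ⊆ J' U)))) ∧
    (∀ A : Set S → Set S, IsSaturation A →
      ((∀ U : Set S, A U ⊆ A' U) ↔
        ((∀ U : Set S, A U ⊆ A' U) ∧ (∀ U : Set S, J' U ⊆ JJ A U)))) :=
  embedding_forgetful_adjunctions_general A' J' hJ' hC
end

section
/- Let r be a binary relation between sets X and S. Then the operator r⁻*∘r⁻ on subsets of S is a saturation, the operator r∘r* on subsets of S is a reduction, and r⁻*∘r⁻ is compatible with r∘r* (i.e. (r⁻*∘r⁻) ⧓ (r∘r*)); hence (S, r⁻*∘r⁻, r∘r*) is a basic topology. -/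
/-- Direct image `r(D) = {a ∈ S | ∃ x ∈ D, x r a}`. -/
def rDir {X S : Type*} (r : X → S → Prop) (D : Set X) : Set S :=
  {a | ∃ x ∈ D, r x a}

/-- Inverse image `r⁻(U) = {x ∈ X | ∃ a ∈ U, x r a}`. -/
def rInv {X S : Type*} (r : X → S → Prop) (U : Set S) : Set X :=
  {x | ∃ a ∈ U, r x a}

/-- `r*(U) = {x ∈ X | r({x}) ⊆ U}`. -/
def rStar {X S : Type*} (r : X → S → Prop) (U : Set S) : Set X :=
  {x | ∀ a : S, r x a → a ∈ U}

/-- `r⁻*(D) = {a ∈ S | r⁻({a}) ⊆ D}`. -/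
def rInvStar {X S : Type*} (r : X → S → Prop) (D : Set X) : Set S :=
  {a | ∀ x : X, r x a → x ∈ D}

theorem GaloisConnection.isSaturation_u_comp_l {S α : Type*} [PartialOrder α]
    {l : Set S → α} {u : α → Set S} (gc : GaloisConnection l u) :
    IsSaturation (fun U => u (l U)) :=
  ⟨fun _ _ h => gc.monotone_u (gc.monotone_l h), fun U => gc.u_l_u_eq_u (l U), gc.le_u_l⟩

theorem GaloisConnection.isReduction_l_comp_u {S α : Type*} [PartialOrder α]
    {l : α → Set S} {u : Set S → α} (gc : GaloisConnection l u) :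
    IsReduction (fun U => l (u U)) :=
  ⟨fun _ _ h => gc.monotone_l (gc.monotone_u h), fun U => gc.l_u_l_eq_l (u U), gc.l_u_le⟩

section Relation

variable {X S : Type*} (r : X → S → Prop)

theorem gc_rInv_rInvStar : GaloisConnection (rInv r) (rInvStar r) :=
  fun _ _ => ⟨fun h a ha _ hxa => h ⟨a, ha, hxa⟩, fun h _ ⟨_, ha, hxa⟩ => h ha _ hxa⟩

theorem gc_rDir_rStar : GaloisConnection (rDir r) (rStar r) :=
  fun _ _ => ⟨fun h x hx _ hxa => h ⟨x, hx, hxa⟩, fun h _ ⟨_, hx, hxa⟩ => h hx _ hxa⟩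

theorem rDir_inter_nonempty_iff (D : Set X) (U : Set S) :
    (rDir r D ∩ U).Nonempty ↔ (D ∩ rInv r U).Nonempty :=
  ⟨fun ⟨a, ⟨x, hx, hxa⟩, ha⟩ => ⟨x, hx, a, ha, hxa⟩,
    fun ⟨x, hx, a, ha, hxa⟩ => ⟨a, ⟨x, hx, hxa⟩, ha⟩⟩

theorem compat_rInvStar_rInv_rDir_rStar :
    Compat (fun U : Set S => rInvStar r (rInv r U)) (fun U : Set S => rDir r (rStar r U)) := by
  intro U V hUV
  have counit : rInv r (rInvStar r (rInv r U)) ⊆ rInv r U := (gc_rInv_rInvStar r).l_u_le _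
  rw [Set.inter_comm, rDir_inter_nonempty_iff] at hUV
  rw [Set.inter_comm, rDir_inter_nonempty_iff]
  exact hUV.mono (Set.inter_subset_inter_right _ counit)

end Relation

/-- For every relation `r` between `X` and `S`, the triple
`(S, r⁻*∘r⁻, r∘r*)` is a basic topology. -/
theorem representable_basic_topology {X S : Type*} (r : X → S → Prop) :
    IsSaturation (fun U : Set S => rInvStar r (rInv r U)) ∧
    IsReduction (fun U : Set S => rDir r (rStar r U)) ∧
    Compat (fun U : Set S => rInvStar r (rInv r U))
      (fun U : Set S => rDir r (rStar r U)) :=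
  ⟨(gc_rInv_rInvStar r).isSaturation_u_comp_l, (gc_rDir_rStar r).isReduction_l_comp_u,
    compat_rInvStar_rInv_rDir_rStar r⟩
end

section
/- Let I, C be an axiom-set on a set S. Then the saturation A_{I,C} and the reduction J_{I,C} are compatible (A_{I,C} ⧓ J_{I,C}), and J_{I,C} is the greatest reduction compatible with A_{I,C}: for every reduction J on S, A_{I,C} ⧓ J implies J ⊆ J_{I,C}. Hence JJ(A_{I,C}) = J_{I,C}. -/
/-- `P` fulfills the axiom-set `I, C`: if `C(a,i) ⊆ P` then `a ∈ P`. -/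
def Fulfills {S : Type*} {I : S → Type*} (C : ∀ a : S, I a → Set S)
    (P : Set S) : Prop :=
  ∀ (a : S) (i : I a), C a i ⊆ P → a ∈ P

/-- `A_{I,C}(U)`: the least subset containing `U` and fulfilling the axiom-set. -/
def AIC {S : Type*} {I : S → Type*} (C : ∀ a : S, I a → Set S)
    (U : Set S) : Set S :=
  ⋂₀ {P : Set S | U ⊆ P ∧ Fulfills C P}

/-- `Z` splits the axiom-set `I, C`: if `a ∈ Z` then `C(a,i)` overlaps `Z`. -/
def SplitsAx {S : Type*} {I : S → Type*} (C : ∀ a : S, I a → Set S)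
    (Z : Set S) : Prop :=
  ∀ (a : S) (i : I a), a ∈ Z → (C a i ∩ Z).Nonempty

/-- `J_{I,C}(V)`: the greatest subset of `V` splitting the axiom-set. -/
def JIC {S : Type*} {I : S → Type*} (C : ∀ a : S, I a → Set S)
    (V : Set S) : Set S :=
  ⋃₀ {Z : Set S | Z ⊆ V ∧ SplitsAx C Z}


lemma splitsAx_splits {S : Type*} {I : S → Type*} (C : ∀ a : S, I a → Set S)
    {Z : Set S} (hZ : SplitsAx C Z) : Splits Z (AIC C) := by
  intro U hU
  by_contra h
  rw [Set.not_nonempty_iff_eq_empty] at h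
  have hsub : U ⊆ Zᶜ := fun x hx hxZ => Set.eq_empty_iff_forall_notMem.mp h x ⟨hx, hxZ⟩
  have hful : Fulfills C Zᶜ := by
    intro a i hCi ha
    obtain ⟨x, hx1, hx2⟩ := hZ a i (ha)
    exact hCi hx1 hx2
  obtain ⟨x, hx1, hx2⟩ := hU
  exact hx1 Zᶜ ⟨hsub, hful⟩ hx2

lemma mem_AIC_self {S : Type*} {I : S → Type*} (C : ∀ a : S, I a → Set S)
    (a : S) (i : I a) : a ∈ AIC C (C a i) := by
  intro P hP
  exact hP.2 a i hP.1

lemma splits_splitsAx {S : Type*} {I : S → Type*} (C : ∀ a : S, I a → Set S)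
    {Z : Set S} (hZ : Splits Z (AIC C)) : SplitsAx C Z := by
  intro a i ha
  exact hZ (C a i) ⟨a, mem_AIC_self C a i, ha⟩

/-- For every axiom-set `I, C` on `S`: `A_{I,C} ⧓ J_{I,C}`, `J_{I,C}` is the
greatest reduction compatible with `A_{I,C}`, and `JJ(A_{I,C}) = J_{I,C}`. -/
theorem generated_basic_topology_is_saturated {S : Type*} {I : S → Type*}
    (C : ∀ a : S, I a → Set S) :
    Compat (AIC C) (JIC C) ∧
    (∀ J : Set S → Set S, IsReduction J → Compat (AIC C) J →
      ∀ V : Set S, J V ⊆ JIC C V) ∧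
    JJ (AIC C) = JIC C := by
  refine ⟨?_, ?_, ?_⟩
  · rintro U V ⟨x, hxA, Z, ⟨hZV, hZax⟩, hxZ⟩
    obtain ⟨y, hyU, hyZ⟩ := splitsAx_splits C hZax U ⟨x, hxA, hxZ⟩
    exact ⟨y, hyU, Z, ⟨hZV, hZax⟩, hyZ⟩
  · rintro J ⟨hmono, hidem, hcontr⟩ hcompat V x hx
    refine ⟨J V, ⟨hcontr V, ?_⟩, hx⟩
    intro a i ha
    have := hcompat (C a i) (J V) ⟨a, mem_AIC_self C a i, by rw [hidem]; exact ha⟩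
    rwa [hidem] at this
  · funext V
    ext a
    constructor
    · rintro ⟨Z, haZ, hZV, hsp⟩
      exact ⟨Z, ⟨hZV, splits_splitsAx C hsp⟩, haZ⟩
    · rintro ⟨Z, ⟨hZV, hax⟩, haZ⟩
      exact ⟨Z, haZ, hZV, splitsAx_splits C hax⟩
end
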